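/- Let r ≥ 1 be a natural number, let α_1, …, α_r be positive real numbers, let δ > 0, and let H_1, …, H_r : ℝ → ℝ be differentiable functions such that: (i) for every i with 1 ≤ i ≤ r-1 and every t ≥ 0, H_i'(t) = H_{i+1}(t) - α_i·H_i(t); (ii) for every t ≥ 0, if H_r(t) ≤ δ/(3α_r) then H_r'(t) ≥ -α_r·H_r(t) + δ; and (iii) H_i(0) ≥ 0 for every 1 ≤ i ≤ r. Then H_i(t) ≥ 0 for every 1 ≤ i ≤ r and every t ≥ 0. -/

import Mathlib

/-!
The last function `H r` can never cross zero: at a zero the safety-filter bound gives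
`H r' ≥ δ > 0`. Once `H (i+1) ≥ 0` is known, `H i' = H (i+1) - α i * H i ≥ -α i * H i`, so
`exp (α i * t) * H i t` is nondecreasing and `H i` stays nonnegative. Downward induction on `i`.
-/

open Set

lemma nonneg_of_deriv_pos_of_eq_zero {f : ℝ → ℝ} (hf : Differentiable ℝ f) (h0 : 0 ≤ f 0)
    (hd : ∀ t ≥ (0 : ℝ), f t = 0 → 0 < deriv f t) :
    ∀ t ≥ (0 : ℝ), 0 ≤ f t := by
  intro t ht
  have hneg : -f t ≤ 0 :=
    image_le_of_deriv_right_lt_deriv_boundary (f := fun s => -f s) (B := 0) (B' := 0)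
      (hf.neg.continuous.continuousOn) (fun s _ => (hf s).hasDerivAt.neg.hasDerivWithinAt)
      (by simpa using h0) (fun _ => hasDerivAt_const _ _)
      (fun s hs hzero => by simpa using hd s hs.1 (neg_eq_zero.mp hzero))
      ⟨ht, le_rfl⟩
  linarith

lemma nonneg_of_neg_mul_le_deriv {f : ℝ → ℝ} (hf : Differentiable ℝ f) (a : ℝ) (h0 : 0 ≤ f 0)
    (hd : ∀ t ≥ (0 : ℝ), -a * f t ≤ deriv f t) :
    ∀ t ≥ (0 : ℝ), 0 ≤ f t := by
  intro t ht
  set g : ℝ → ℝ := fun s => Real.exp (a * s) * f s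
  have hg : ∀ s, HasDerivAt g (Real.exp (a * s) * (deriv f s + a * f s)) s := fun s => by
    have hexp := ((hasDerivAt_id s).const_mul a).exp
    exact (hexp.mul (hf s).hasDerivAt).congr_deriv (by simp only [id, mul_one]; ring)
  have hmono : MonotoneOn g (Ici 0) :=
    monotoneOn_of_hasDerivWithinAt_nonneg (convex_Ici 0)
      (fun s _ => (hg s).continuousAt.continuousWithinAt) (fun s _ => (hg s).hasDerivWithinAt)
      (fun s hs => mul_nonneg (Real.exp_pos _).le (by
        rw [interior_Ici] at hs
        linarith [hd s (le_of_lt hs)]))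
  have hgt : 0 ≤ g t := by
    have hg0 : g 0 = f 0 := by simp [g]
    exact (hg0 ▸ h0).trans (hmono self_mem_Ici ht ht)
  exact nonneg_of_mul_nonneg_right hgt (Real.exp_pos _)

theorem cascade_nonneg_ebsf_general
    (r : ℕ) (α : ℕ → ℝ) (hα : ∀ i, 1 ≤ i → i ≤ r → 0 < α i)
    (δ : ℝ) (hδ : 0 < δ)
    (H : ℕ → ℝ → ℝ) (hdiff : ∀ i, 1 ≤ i → i ≤ r → Differentiable ℝ (H i))
    (hcasc : ∀ i, 1 ≤ i → i ≤ r - 1 → ∀ t ≥ (0:ℝ),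
      deriv (H i) t = H (i + 1) t - α i * H i t)
    (hlast : ∀ t ≥ (0:ℝ), H r t ≤ δ / (3 * α r) → deriv (H r) t ≥ -α r * H r t + δ)
    (h0 : ∀ i, 1 ≤ i → i ≤ r → 0 ≤ H i 0) :
    ∀ i, 1 ≤ i → i ≤ r → ∀ t ≥ (0:ℝ), 0 ≤ H i t := by
  intro i hi hir
  have hr : 1 ≤ r := hi.trans hir
  have hαr : 0 < α r := hα r hr le_rfl
  have hHr_nonneg : ∀ t ≥ (0 : ℝ), 0 ≤ H r t :=
    nonneg_of_deriv_pos_of_eq_zero (hdiff r hr le_rfl) (h0 r hr le_rfl) fun t ht hzero => by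
      have := hlast t ht (by rw [hzero]; positivity)
      rw [hzero] at this
      linarith
  refine Nat.decreasingInduction' (P := fun k => ∀ t ≥ (0 : ℝ), 0 ≤ H k t)
    (fun k hkr hik hnext => ?_) hir hHr_nonneg
  have hk : 1 ≤ k := hi.trans hik
  refine nonneg_of_neg_mul_le_deriv (hdiff k hk hkr.le) (α k) (h0 k hk hkr.le) fun t ht => ?_
  rw [hcasc k hk (Nat.le_sub_one_of_lt hkr) t ht]
  linarith [hnext t ht]

/-- full analytic content of claim (a) of Theorem 4. The cascade relations
`H_i' = H_{i+1} - α_i·H_i` together with the Error-Based Safety Filter guarantee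
`H_r' ≥ -α_r·H_r + δ` whenever `H_r ≤ δ/(3α_r)` propagate nonnegativity of all `H_i`. -/
theorem cascade_nonneg_ebsf
    (r : ℕ) (hr : 1 ≤ r) (α : ℕ → ℝ) (hα : ∀ i, 1 ≤ i → i ≤ r → 0 < α i)
    (δ : ℝ) (hδ : 0 < δ)
    (H : ℕ → ℝ → ℝ) (hdiff : ∀ i, 1 ≤ i → i ≤ r → Differentiable ℝ (H i))
    (hcasc : ∀ i, 1 ≤ i → i ≤ r - 1 → ∀ t ≥ (0:ℝ),
      deriv (H i) t = H (i + 1) t - α i * H i t)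
    (hlast : ∀ t ≥ (0:ℝ), H r t ≤ δ / (3 * α r) → deriv (H r) t ≥ -α r * H r t + δ)
    (h0 : ∀ i, 1 ≤ i → i ≤ r → 0 ≤ H i 0) :
    ∀ i, 1 ≤ i → i ≤ r → ∀ t ≥ (0:ℝ), 0 ≤ H i t :=
  cascade_nonneg_ebsf_general r α hα δ hδ H hdiff hcasc hlast h0
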